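/- Conditional Expected Drawdown is convex in the return path: for random vectors X, Y in ℝ^n with integrable maximum drawdowns and λ ∈ [0,1], CED_α(λX + (1−λ)Y) ≤ λ·CED_α(X) + (1−λ)·CED_α(Y). -/

import Mathlib

open MeasureTheory

/-- Drawdown at time `j` of the cumulative return path `x`:
`d_j(x) = max_{i ≤ j} x_i − x_j`. -/
noncomputable def dd {n : ℕ} (x : Fin n → ℝ) (j : Fin n) : ℝ :=
  (Finset.Iic j).sup' ⟨j, Finset.mem_Iic.mpr le_rfl⟩ x - x j

/-- Maximum drawdown of the path `x`:
`μ(x) = max_{i < j} max{x_j − x_i, 0}` (with value `0` if there are no pairs). -/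
noncomputable def mdd {n : ℕ} (x : Fin n → ℝ) : ℝ :=
  sSup {y | y = 0 ∨ ∃ i j : Fin n, i < j ∧ y = max (x j - x i) 0}

/-- Lower `θ`-quantile of a real random variable `X` under `P`. -/
noncomputable def lowerQuantile {Ω : Type*} [MeasurableSpace Ω] (P : Measure Ω)
    (X : Ω → ℝ) (θ : ℝ) : ℝ :=
  sInf {x : ℝ | θ ≤ (P {ω | X ω ≤ x}).toReal}

/-- `α`-tail mean: `TM_α(X) = (1/(1−α)) ∫_α^1 q_θ(X) dθ`. -/
noncomputable def tailMean {Ω : Type*} [MeasurableSpace Ω] (P : Measure Ω)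
    (X : Ω → ℝ) (α : ℝ) : ℝ :=
  (1 - α)⁻¹ * ∫ θ in α..1, lowerQuantile P X θ

/-- Conditional Expected Drawdown: tail mean of the maximum drawdown distribution. -/
noncomputable def CED {Ω : Type*} [MeasurableSpace Ω] (P : Measure Ω)
    {n : ℕ} (X : Ω → Fin n → ℝ) (α : ℝ) : ℝ :=
  tailMean P (fun ω => mdd (X ω)) α

/-!
The maximum drawdown is a supremum of positive parts of linear forms in the path, hence convex,
and it is nonnegative. It therefore suffices that the tail mean is monotone (lower quantiles are
monotone in the random variable) and convex. Convexity comes from the Rockafellar–Uryasev formula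
`TM_α(Z) = min_c (c + (1 - α)⁻¹ E[(Z - c)⁺])`, attained at the `α`-quantile: evaluating it at the
convex combination of the two quantiles and using convexity of `x ↦ x⁺` gives the inequality. The
formula itself is the quantile transform: under the uniform law on `(0, 1)`, the lower quantile
function of `Z` has the law of `Z`, so `∫₀¹ (q_θ - c)⁺ dθ = E[(Z - c)⁺]`.
-/

open Set Filter Topology ProbabilityTheory

lemma max_mul_add_mul_zero_le {a b : ℝ} (ha : 0 ≤ a) (hb : 0 ≤ b) (u v : ℝ) :
    max (a * u + b * v) 0 ≤ a * max u 0 + b * max v 0 := by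
  calc max (a * u + b * v) 0 ≤ max (a * u) 0 + max (b * v) 0 := by
        simpa using max_add_add_le_max_add_max (a := a * u) (b := b * v) (c := (0 : ℝ)) (d := 0)
    _ = a * max u 0 + b * max v 0 := by
        rw [mul_max_of_nonneg _ _ ha, mul_max_of_nonneg _ _ hb, mul_zero, mul_zero]

section MaxDrawdown

variable {n : ℕ}

lemma bddAbove_mdd_set (x : Fin n → ℝ) :
    BddAbove {y | y = 0 ∨ ∃ i j : Fin n, i < j ∧ y = max (x j - x i) 0} := by
  refine ((Set.finite_range fun p : Fin n × Fin n => max (x p.2 - x p.1) 0).insert 0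
    |>.subset ?_).bddAbove
  rintro y (rfl | ⟨i, j, -, rfl⟩)
  · exact mem_insert _ _
  · exact mem_insert_of_mem _ ⟨(i, j), rfl⟩

lemma mdd_nonneg (x : Fin n → ℝ) : 0 ≤ mdd x :=
  le_csSup (bddAbove_mdd_set x) (Or.inl rfl)

lemma max_sub_le_mdd (x : Fin n → ℝ) {i j : Fin n} (h : i < j) :
    max (x j - x i) 0 ≤ mdd x :=
  le_csSup (bddAbove_mdd_set x) (Or.inr ⟨i, j, h, rfl⟩)

theorem convexOn_mdd : ConvexOn ℝ univ (mdd : (Fin n → ℝ) → ℝ) := by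
  refine ⟨convex_univ, fun x _ y _ a b ha hb _ => csSup_le ⟨0, Or.inl rfl⟩ ?_⟩
  rintro _ (rfl | ⟨i, j, hij, rfl⟩)
  · exact add_nonneg (mul_nonneg ha (mdd_nonneg x)) (mul_nonneg hb (mdd_nonneg y))
  · calc max ((a • x + b • y) j - (a • x + b • y) i) 0
        = max (a * (x j - x i) + b * (y j - y i)) 0 := by
          simp only [Pi.add_apply, Pi.smul_apply, smul_eq_mul]; ring_nf
      _ ≤ a * max (x j - x i) 0 + b * max (y j - y i) 0 := max_mul_add_mul_zero_le ha hb _ _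
      _ ≤ a • mdd x + b • mdd y :=
          add_le_add (mul_le_mul_of_nonneg_left (max_sub_le_mdd x hij) ha)
            (mul_le_mul_of_nonneg_left (max_sub_le_mdd y hij) hb)

end MaxDrawdown

lemma csInf_le_iff_le_cdf (μ : Measure ℝ) [IsProbabilityMeasure μ] {θ : ℝ} (hθ : θ ∈ Ioo 0 1)
    (x : ℝ) : sInf {y | θ ≤ cdf μ y} ≤ x ↔ θ ≤ cdf μ x := by
  set S := {y | θ ≤ cdf μ y}
  obtain ⟨b, hb⟩ := ((tendsto_cdf_atBot μ).eventually (gt_mem_nhds hθ.1)).exists_forall_of_atBot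
  have hbdd : BddBelow S := ⟨b, fun y hy => le_of_not_gt fun hyb => (hb y hyb.le).not_ge hy⟩
  have hne : S.Nonempty := ((tendsto_cdf_atTop μ).eventually (eventually_ge_nhds hθ.2)).exists
  -- right-continuity of the cdf puts `sInf S` in `S`
  have hmem : sInf S ∈ S := by
    refine ge_of_tendsto (((cdf μ).right_continuous _).mono Ioi_subset_Ici_self) ?_
    filter_upwards [self_mem_nhdsWithin] with y hy
    obtain ⟨z, hzS, hzy⟩ := exists_lt_of_csInf_lt hne hy
    exact hzS.trans (monotone_cdf μ hzy.le)
  exact ⟨fun h => hmem.trans (monotone_cdf μ h), fun h => csInf_le hbdd h⟩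

section Quantile

variable {Ω : Type*} [MeasurableSpace Ω] {P : Measure Ω} {Z W : Ω → ℝ} {θ α x : ℝ}

lemma nonneg_of_le_measure_le (hZ0 : 0 ≤ Z) (hθ : 0 < θ)
    (hx : θ ≤ (P {ω | Z ω ≤ x}).toReal) : 0 ≤ x := by
  by_contra! hx0
  have hempty : {ω | Z ω ≤ x} = ∅ :=
    eq_empty_of_forall_notMem fun ω hω => (hx0.trans_le (hZ0 ω)).not_ge hω
  simp only [hempty, measure_empty, ENNReal.toReal_zero] at hx
  exact hθ.not_ge hx

lemma lowerQuantile_nonneg (hZ0 : 0 ≤ Z) (hθ : 0 < θ) : 0 ≤ lowerQuantile P Z θ :=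
  Real.sInf_nonneg fun _ hx => nonneg_of_le_measure_le hZ0 hθ hx

lemma tailMean_eq_setIntegral (hα : α ≤ 1) :
    tailMean P Z α = (1 - α)⁻¹ * ∫ θ in Ioo α 1, lowerQuantile P Z θ := by
  rw [tailMean, intervalIntegral.integral_of_le hα, integral_Ioc_eq_integral_Ioo]

variable [IsProbabilityMeasure P]

lemma toReal_measure_le_eq_cdf_map (hZ : AEMeasurable Z P) (x : ℝ) :
    (P {ω | Z ω ≤ x}).toReal = cdf (P.map Z) x := by
  have := Measure.isProbabilityMeasure_map hZ
  rw [cdf_eq_real, measureReal_def, Measure.map_apply_of_aemeasurable hZ measurableSet_Iic]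
  rfl

lemma lowerQuantile_le_iff (hZ : AEMeasurable Z P) (hθ : θ ∈ Ioo 0 1) (x : ℝ) :
    lowerQuantile P Z θ ≤ x ↔ θ ≤ (P {ω | Z ω ≤ x}).toReal := by
  have := Measure.isProbabilityMeasure_map hZ
  simp only [lowerQuantile, toReal_measure_le_eq_cdf_map hZ]
  exact csInf_le_iff_le_cdf _ hθ x

lemma monotoneOn_lowerQuantile (hZ : AEMeasurable Z P) :
    MonotoneOn (lowerQuantile P Z) (Ioo 0 1) := fun _ h₁ _ h₂ h =>
  (lowerQuantile_le_iff hZ h₁ _).2 (h.trans ((lowerQuantile_le_iff hZ h₂ _).1 le_rfl))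

lemma aemeasurable_lowerQuantile (hZ : AEMeasurable Z P) :
    AEMeasurable (lowerQuantile P Z) (volume.restrict (Ioo 0 1)) :=
  aemeasurable_restrict_of_monotoneOn measurableSet_Ioo (monotoneOn_lowerQuantile hZ)

lemma lowerQuantile_mono (hZ0 : 0 ≤ Z) (hW : AEMeasurable W P) (hZW : Z ≤ W)
    (hθ : θ ∈ Ioo 0 1) : lowerQuantile P Z θ ≤ lowerQuantile P W θ := by
  refine csInf_le ⟨0, fun _ hx => nonneg_of_le_measure_le hZ0 hθ.1 hx⟩ ?_
  exact ((lowerQuantile_le_iff hW hθ _).1 le_rfl).trans <|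
    ENNReal.toReal_mono (measure_ne_top _ _) (measure_mono fun ω hω => (hZW ω).trans hω)

theorem map_lowerQuantile_volume (hZ : AEMeasurable Z P) :
    (volume.restrict (Ioo 0 1)).map (lowerQuantile P Z) = P.map Z := by
  refine Measure.ext_of_Iic _ _ fun x => ?_
  set t := (P {ω | Z ω ≤ x}).toReal
  have ht : t ≤ 1 := measureReal_le_one
  have hpre : lowerQuantile P Z ⁻¹' Iic x ∩ Ioo 0 1 = Iic t ∩ Ioo 0 1 := by
    ext θ
    exact and_congr_left fun hθ => lowerQuantile_le_iff hZ hθ x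
  rw [Measure.map_apply_of_aemeasurable (aemeasurable_lowerQuantile hZ) measurableSet_Iic,
    Measure.restrict_apply' measurableSet_Ioo, hpre, ← Measure.restrict_apply' measurableSet_Ioo,
    Measure.restrict_congr_set Ioo_ae_eq_Ioc, Measure.restrict_apply measurableSet_Iic,
    Iic_inter_Ioc_of_le ht, Real.volume_Ioc, sub_zero,
    ENNReal.ofReal_toReal (measure_ne_top _ _), Measure.map_apply_of_aemeasurable hZ measurableSet_Iic]
  rfl

theorem integrableOn_lowerQuantile (hZ : Integrable Z P) :
    IntegrableOn (lowerQuantile P Z) (Ioo 0 1) := by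
  have hZm := hZ.aemeasurable
  rw [IntegrableOn, ← Function.id_comp (lowerQuantile P Z),
    ← integrable_map_measure aestronglyMeasurable_id (aemeasurable_lowerQuantile hZm),
    map_lowerQuantile_volume hZm, integrable_map_measure aestronglyMeasurable_id hZm]
  exact hZ

theorem setIntegral_comp_lowerQuantile (hZ : AEMeasurable Z P) {g : ℝ → ℝ} (hg : Measurable g) :
    ∫ θ in Ioo 0 1, g (lowerQuantile P Z θ) = ∫ ω, g (Z ω) ∂P := by
  rw [← integral_map (aemeasurable_lowerQuantile hZ) hg.aestronglyMeasurable,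
    map_lowerQuantile_volume hZ, integral_map hZ hg.aestronglyMeasurable]

end Quantile

section TailMean

variable {Ω : Type*} [MeasurableSpace Ω] {P : Measure Ω} [IsProbabilityMeasure P]
  {Z W : Ω → ℝ} {α : ℝ}

lemma setIntegral_lowerQuantile_sub (hZ : Integrable Z P) (hα : α ∈ Icc 0 1) (c : ℝ) :
    ∫ θ in Ioo α 1, (lowerQuantile P Z θ - c)
      = (∫ θ in Ioo α 1, lowerQuantile P Z θ) - (1 - α) * c := by
  rw [integral_sub ((integrableOn_lowerQuantile hZ).mono_set (Ioo_subset_Ioo_left hα.1))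
    (integrable_const c), setIntegral_const, Real.volume_real_Ioo_of_le hα.2, smul_eq_mul]

theorem tailMean_le (hZ : Integrable Z P) (hα : α ∈ Ico 0 1) (c : ℝ) :
    tailMean P Z α ≤ c + (1 - α)⁻¹ * ∫ ω, max (Z ω - c) 0 ∂P := by
  have hsub : Ioo α 1 ⊆ Ioo 0 1 := Ioo_subset_Ioo_left hα.1
  have hq := integrableOn_lowerQuantile hZ
  have hexcess : IntegrableOn (fun θ => max (lowerQuantile P Z θ - c) 0) (Ioo 0 1) :=
    (hq.sub (integrable_const c)).pos_part
  have key : (∫ θ in Ioo α 1, lowerQuantile P Z θ) - (1 - α) * c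
      ≤ ∫ ω, max (Z ω - c) 0 ∂P :=
    calc (∫ θ in Ioo α 1, lowerQuantile P Z θ) - (1 - α) * c
        = ∫ θ in Ioo α 1, (lowerQuantile P Z θ - c) :=
          (setIntegral_lowerQuantile_sub hZ ⟨hα.1, hα.2.le⟩ c).symm
      _ ≤ ∫ θ in Ioo α 1, max (lowerQuantile P Z θ - c) 0 :=
          integral_mono ((hq.mono_set hsub).sub (integrable_const c)) (hexcess.mono_set hsub)
            fun θ => le_max_left _ _
      _ ≤ ∫ θ in Ioo 0 1, max (lowerQuantile P Z θ - c) 0 :=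
          setIntegral_mono_set hexcess (ae_of_all _ fun θ => le_max_right _ _)
            hsub.eventuallyLE
      _ = ∫ ω, max (Z ω - c) 0 ∂P :=
          setIntegral_comp_lowerQuantile hZ.aemeasurable
            ((measurable_id.sub_const c).max measurable_const)
  have h1α : 0 < 1 - α := sub_pos.2 hα.2
  rw [tailMean_eq_setIntegral hα.2.le]
  calc (1 - α)⁻¹ * ∫ θ in Ioo α 1, lowerQuantile P Z θ
      = c + (1 - α)⁻¹ * ((∫ θ in Ioo α 1, lowerQuantile P Z θ) - (1 - α) * c) := by
        field_simp; ring
    _ ≤ c + (1 - α)⁻¹ * ∫ ω, max (Z ω - c) 0 ∂P := by gcongr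

theorem tailMean_eq (hZ : Integrable Z P) (hα : α ∈ Ioo 0 1) :
    tailMean P Z α = lowerQuantile P Z α
      + (1 - α)⁻¹ * ∫ ω, max (Z ω - lowerQuantile P Z α) 0 ∂P := by
  set c := lowerQuantile P Z α
  have hmono := monotoneOn_lowerQuantile hZ.aemeasurable
  -- the excess over the `α`-quantile vanishes exactly below level `α`
  have key : (∫ θ in Ioo α 1, lowerQuantile P Z θ) - (1 - α) * c
      = ∫ ω, max (Z ω - c) 0 ∂P :=
    calc (∫ θ in Ioo α 1, lowerQuantile P Z θ) - (1 - α) * c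
        = ∫ θ in Ioo α 1, (lowerQuantile P Z θ - c) :=
          (setIntegral_lowerQuantile_sub hZ ⟨hα.1.le, hα.2.le⟩ c).symm
      _ = ∫ θ in Ioo α 1, max (lowerQuantile P Z θ - c) 0 :=
          setIntegral_congr_fun measurableSet_Ioo fun θ hθ => (max_eq_left (sub_nonneg.2
            (hmono hα ⟨hα.1.trans hθ.1, hθ.2⟩ hθ.1.le))).symm
      _ = ∫ θ in Ioo 0 1, max (lowerQuantile P Z θ - c) 0 :=
          (setIntegral_eq_of_subset_of_forall_sdiff_eq_zero measurableSet_Ioo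
            (Ioo_subset_Ioo_left hα.1.le) fun θ hθ => max_eq_right (sub_nonpos.2
              (hmono hθ.1 hα (not_lt.1 fun h => hθ.2 ⟨h, hθ.1.2⟩)))).symm
      _ = ∫ ω, max (Z ω - c) 0 ∂P :=
          setIntegral_comp_lowerQuantile hZ.aemeasurable
            ((measurable_id.sub_const c).max measurable_const)
  have h1α : 0 < 1 - α := sub_pos.2 hα.2
  rw [tailMean_eq_setIntegral hα.2.le, ← key]
  field_simp
  ring

theorem tailMean_mono (hZ0 : 0 ≤ Z) (hW : Integrable W P) (hZW : Z ≤ W) (hα : α ∈ Ioo 0 1) :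
    tailMean P Z α ≤ tailMean P W α := by
  rw [tailMean_eq_setIntegral hα.2.le, tailMean_eq_setIntegral hα.2.le]
  refine mul_le_mul_of_nonneg_left (integral_mono_of_nonneg ?_
    ((integrableOn_lowerQuantile hW).mono_set (Ioo_subset_Ioo_left hα.1.le)) ?_)
    (inv_nonneg.2 (sub_nonneg.2 hα.2.le))
  · exact ae_restrict_of_forall_mem measurableSet_Ioo fun θ hθ =>
      lowerQuantile_nonneg hZ0 (hα.1.trans hθ.1)
  · exact ae_restrict_of_forall_mem measurableSet_Ioo fun θ hθ =>
      lowerQuantile_mono hZ0 hW.aemeasurable hZW ⟨hα.1.trans hθ.1, hθ.2⟩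

theorem convexOn_tailMean (hα : α ∈ Ioo 0 1) :
    ConvexOn ℝ {Z : Ω → ℝ | Integrable Z P} (fun Z => tailMean P Z α) := by
  refine ⟨fun A hA B hB a b _ _ _ => (hA.smul a).add (hB.smul b), ?_⟩
  intro A hA B hB a b ha hb _
  set cA := lowerQuantile P A α
  set cB := lowerQuantile P B α
  have hexcess : ∫ ω, max ((a • A + b • B) ω - (a * cA + b * cB)) 0 ∂P
      ≤ a * ∫ ω, max (A ω - cA) 0 ∂P + b * ∫ ω, max (B ω - cB) 0 ∂P := by
    have hA' : Integrable (fun ω => max (A ω - cA) 0) P := (hA.sub (integrable_const cA)).pos_part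
    have hB' : Integrable (fun ω => max (B ω - cB) 0) P := (hB.sub (integrable_const cB)).pos_part
    rw [← integral_const_mul, ← integral_const_mul, ← integral_add (hA'.const_mul a)
      (hB'.const_mul b)]
    refine integral_mono ((((hA.smul a).add (hB.smul b)).sub (integrable_const _)).pos_part)
      ((hA'.const_mul a).add (hB'.const_mul b)) fun ω => ?_
    calc max ((a • A + b • B) ω - (a * cA + b * cB)) 0
        = max (a * (A ω - cA) + b * (B ω - cB)) 0 := by
          simp only [Pi.add_apply, Pi.smul_apply, smul_eq_mul]; ring_nf
      _ ≤ a * max (A ω - cA) 0 + b * max (B ω - cB) 0 := max_mul_add_mul_zero_le ha hb _ _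
  have h1α : 0 ≤ (1 - α)⁻¹ := inv_nonneg.2 (sub_nonneg.2 hα.2.le)
  calc tailMean P (a • A + b • B) α
      ≤ (a * cA + b * cB)
        + (1 - α)⁻¹ * ∫ ω, max ((a • A + b • B) ω - (a * cA + b * cB)) 0 ∂P :=
        tailMean_le ((hA.smul a).add (hB.smul b)) ⟨hα.1.le, hα.2⟩ _
    _ ≤ (a * cA + b * cB)
        + (1 - α)⁻¹ * (a * ∫ ω, max (A ω - cA) 0 ∂P + b * ∫ ω, max (B ω - cB) 0 ∂P) := by
        gcongr
    _ = a • tailMean P A α + b • tailMean P B α := by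
        rw [tailMean_eq hA hα, tailMean_eq hB hα, smul_eq_mul, smul_eq_mul]
        ring

end TailMean

theorem CED_convex {Ω : Type*} [MeasurableSpace Ω] (P : Measure Ω)
    [IsProbabilityMeasure P] {n : ℕ} (X Y : Ω → Fin n → ℝ)
    (hX : Integrable (fun ω => mdd (X ω)) P)
    (hY : Integrable (fun ω => mdd (Y ω)) P)
    (l : ℝ) (hl : l ∈ Set.Icc (0:ℝ) 1) (α : ℝ) (hα : α ∈ Set.Ioo (0:ℝ) 1) :
    CED P (fun ω => l • X ω + (1 - l) • Y ω) α
      ≤ l * CED P X α + (1 - l) * CED P Y α := by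
  obtain ⟨hl0, hl1⟩ := hl
  have h1l : 0 ≤ 1 - l := sub_nonneg.2 hl1
  set A := fun ω => mdd (X ω)
  set B := fun ω => mdd (Y ω)
  have hmdd : (fun ω => mdd (l • X ω + (1 - l) • Y ω)) ≤ l • A + (1 - l) • B := fun ω =>
    convexOn_mdd.2 trivial trivial hl0 h1l (add_sub_cancel l 1)
  calc tailMean P (fun ω => mdd (l • X ω + (1 - l) • Y ω)) α
      ≤ tailMean P (l • A + (1 - l) • B) α :=
        tailMean_mono (fun ω => mdd_nonneg _) ((hX.smul l).add (hY.smul (1 - l))) hmdd hα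
    _ ≤ l • tailMean P A α + (1 - l) • tailMean P B α :=
        (convexOn_tailMean hα).2 hX hY hl0 h1l (add_sub_cancel l 1)
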